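/- (Loss decomposition.) Let 𝒟 be a probability distribution over pairs (x,y) ∈ ℝ^d × {0,1} with E[‖x‖] < ∞, let V ⊆ ℝ^d be a linear subspace, and let θ* ∈ V minimize the expected BCE loss L over V. Then for every θ ∈ V, with p*(x) = σ(θ*ᵀx) and q(x) = σ(θᵀx), the loss decomposes exactly as L(θ) = L(θ*) + D(p* ‖ q), where D denotes the expected Bernoulli KL divergence. -/

import Mathlib

open MeasureTheory ProbabilityTheory

/-- The sigmoid (logistic) function `σ(z) = 1 / (1 + e^{-z})`. -/
noncomputable def sigmoid (z : ℝ) : ℝ := 1 / (1 + Real.exp (-z))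

/-- The expected BCE loss `L(θ) = E[log(1+e^{θᵀx}) − y·θᵀx]`. -/
noncomputable def bceLoss {d : ℕ} (μ : Measure ((Fin d → ℝ) × ℝ)) (θ : Fin d → ℝ) : ℝ :=
  ∫ q, (Real.log (1 + Real.exp (∑ i, θ i * q.1 i)) - q.2 * (∑ i, θ i * q.1 i)) ∂μ

/-- Pointwise Bernoulli Kullback–Leibler divergence. -/
noncomputable def klBernoulli (p q : ℝ) : ℝ :=
  p * Real.log (p / q) + (1 - p) * Real.log ((1 - p) / (1 - q))

/-!
The pointwise loss is `bce z y = softplus z - y * z`, where `softplus' = σ`, and the Bregman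
divergence of `softplus` is the Bernoulli KL divergence:
`softplus b - softplus a - σ a * (b - a) = KL(σ a ‖ σ b)`. Hence, pointwise,
`bce b y - bce a y = KL(σ a ‖ σ b) + (σ a - y) * (b - a)`. Integrated at `a = θ*ᵀx`, `b = θᵀx`,
the last term is the derivative at `0` of `t ↦ L(θ* + t (θ - θ*))` (differentiation under the
integral sign, dominated by `(1 + |y|) |(θ - θ*)ᵀx|`), and it vanishes because the whole line
lies in `V`, on which `θ*` minimizes `L`.
-/

open Filter

lemma sigmoid_eq_real_sigmoid : sigmoid = Real.sigmoid := funext fun _ => one_div _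

lemma sigmoid_eq_exp_div (z : ℝ) : sigmoid z = Real.exp z / (1 + Real.exp z) := by
  rw [sigmoid, Real.exp_neg]
  field_simp
  ring

lemma abs_sigmoid_le_one (z : ℝ) : |sigmoid z| ≤ 1 := by
  rw [sigmoid_eq_real_sigmoid, abs_of_pos (Real.sigmoid_pos z)]
  exact Real.sigmoid_le_one z

noncomputable def softplus (z : ℝ) : ℝ := Real.log (1 + Real.exp z)

lemma softplus_nonneg (z : ℝ) : 0 ≤ softplus z :=
  Real.log_nonneg (by linarith [Real.exp_pos z])

lemma softplus_le_log_two_add_abs (z : ℝ) : softplus z ≤ Real.log 2 + |z| := by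
  have hz : Real.exp z ≤ Real.exp |z| := Real.exp_le_exp.2 (le_abs_self z)
  calc softplus z ≤ Real.log (2 * Real.exp |z|) :=
        Real.log_le_log (by positivity) (by linarith [Real.one_le_exp (abs_nonneg z)])
    _ = Real.log 2 + |z| := by rw [Real.log_mul two_ne_zero (Real.exp_pos _).ne', Real.log_exp]

lemma softplus_neg (z : ℝ) : softplus (-z) = softplus z - z := by
  have : 1 + Real.exp (-z) = Real.exp (-z) * (1 + Real.exp z) := by
    rw [mul_add, mul_one, ← Real.exp_add, neg_add_cancel, Real.exp_zero, add_comm]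
  rw [softplus, this, Real.log_mul (Real.exp_pos _).ne' (by positivity), Real.log_exp, softplus]
  ring

lemma hasDerivAt_softplus (z : ℝ) : HasDerivAt softplus (sigmoid z) z := by
  rw [sigmoid_eq_exp_div]
  exact ((Real.hasDerivAt_exp z).const_add 1).log (by positivity)

lemma continuous_softplus : Continuous softplus :=
  continuous_iff_continuousAt.2 fun z => (hasDerivAt_softplus z).continuousAt

lemma log_sigmoid (z : ℝ) : Real.log (sigmoid z) = z - softplus z := by
  rw [sigmoid, one_div, Real.log_inv, ← softplus, softplus_neg]
  ring

lemma log_one_sub_sigmoid (z : ℝ) : Real.log (1 - sigmoid z) = -softplus z := by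
  rw [sigmoid_eq_real_sigmoid, ← Real.sigmoid_neg, ← sigmoid_eq_real_sigmoid, log_sigmoid,
    softplus_neg]
  ring

lemma klBernoulli_sigmoid_sigmoid (a b : ℝ) :
    klBernoulli (sigmoid a) (sigmoid b) = sigmoid a * (a - b) + softplus b - softplus a := by
  have h₀ (z : ℝ) : sigmoid z ≠ 0 := by
    rw [sigmoid_eq_real_sigmoid]; exact (Real.sigmoid_pos z).ne'
  have h₁ (z : ℝ) : 1 - sigmoid z ≠ 0 := by
    rw [sigmoid_eq_real_sigmoid]; exact (sub_pos.2 (Real.sigmoid_lt_one z)).ne'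
  rw [klBernoulli, Real.log_div (h₀ a) (h₀ b), Real.log_div (h₁ a) (h₁ b), log_sigmoid,
    log_sigmoid, log_one_sub_sigmoid, log_one_sub_sigmoid]
  ring

noncomputable def bce (z y : ℝ) : ℝ := softplus z - y * z

lemma bce_sub_bce (a b y : ℝ) :
    bce b y - bce a y = klBernoulli (sigmoid a) (sigmoid b) + (sigmoid a - y) * (b - a) := by
  rw [klBernoulli_sigmoid_sigmoid, bce, bce]
  ring

lemma hasDerivAt_bce (z y : ℝ) : HasDerivAt (fun z => bce z y) (sigmoid z - y) z := by
  have h := (hasDerivAt_softplus z).fun_sub ((hasDerivAt_id' z).const_mul y)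
  rwa [mul_one] at h

lemma bceLoss_eq_integral_bce {d : ℕ} (μ : Measure ((Fin d → ℝ) × ℝ)) (θ : Fin d → ℝ) :
    bceLoss μ θ = ∫ q, bce (θ ⬝ᵥ q.1) q.2 ∂μ := rfl

section IntegralBCE

variable {α : Type*} [MeasurableSpace α] {μ : Measure α} {A B y : α → ℝ} {C : ℝ}

lemma MeasureTheory.AEStronglyMeasurable.sigmoid_comp (hA : AEStronglyMeasurable A μ) :
    AEStronglyMeasurable (fun a => sigmoid (A a)) μ := by
  rw [sigmoid_eq_real_sigmoid]
  exact continuous_sigmoid.comp_aestronglyMeasurable hA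

variable [IsFiniteMeasure μ]

lemma MeasureTheory.Integrable.softplus_comp (hA : Integrable A μ) :
    Integrable (fun a => softplus (A a)) μ := by
  refine ((integrable_const (Real.log 2)).add hA.abs).mono'
    (continuous_softplus.comp_aestronglyMeasurable hA.aestronglyMeasurable) ?_
  filter_upwards with a
  rw [Real.norm_eq_abs, abs_of_nonneg (softplus_nonneg _)]
  exact softplus_le_log_two_add_abs _

lemma MeasureTheory.Integrable.bce_comp (hA : Integrable A μ)
    (hy_meas : AEStronglyMeasurable y μ) (hy : ∀ᵐ a ∂μ, |y a| ≤ C) :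
    Integrable (fun a => bce (A a) (y a)) μ :=
  hA.softplus_comp.sub (hA.bdd_mul hy_meas (by simpa only [Real.norm_eq_abs] using hy))

lemma MeasureTheory.Integrable.klBernoulli_sigmoid_comp (hA : Integrable A μ)
    (hB : Integrable B μ) :
    Integrable (fun a => klBernoulli (sigmoid (A a)) (sigmoid (B a))) μ := by
  have hσ : Integrable (fun a => sigmoid (A a) * (A a - B a)) μ :=
    (hA.sub hB).bdd_mul hA.aestronglyMeasurable.sigmoid_comp
      (ae_of_all _ fun a => abs_sigmoid_le_one _)
  refine ((hσ.add hB.softplus_comp).sub hA.softplus_comp).congr (ae_of_all _ fun a => ?_)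
  exact (klBernoulli_sigmoid_sigmoid _ _).symm

lemma integral_bce_eq_add_integral_klBernoulli_add (hA : Integrable A μ) (hB : Integrable B μ)
    (hy_meas : AEStronglyMeasurable y μ) (hy : ∀ᵐ a ∂μ, |y a| ≤ C) :
    ∫ a, bce (B a) (y a) ∂μ = ∫ a, bce (A a) (y a) ∂μ
      + ∫ a, klBernoulli (sigmoid (A a)) (sigmoid (B a)) ∂μ
      + ∫ a, (sigmoid (A a) - y a) * (B a - A a) ∂μ := by
  have h : ∫ a, (bce (B a) (y a) - bce (A a) (y a)
      - klBernoulli (sigmoid (A a)) (sigmoid (B a))) ∂μ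
      = ∫ a, (sigmoid (A a) - y a) * (B a - A a) ∂μ :=
    integral_congr_ae (ae_of_all _ fun a => by linarith [bce_sub_bce (A a) (B a) (y a)])
  have hBA : Integrable (fun a => bce (B a) (y a) - bce (A a) (y a)) μ :=
    (hB.bce_comp hy_meas hy).sub (hA.bce_comp hy_meas hy)
  rw [integral_sub hBA (hA.klBernoulli_sigmoid_comp hB),
    integral_sub (hB.bce_comp hy_meas hy) (hA.bce_comp hy_meas hy)] at h
  linarith

lemma hasDerivAt_integral_bce_add_mul (hA : Integrable A μ) (hB : Integrable B μ)
    (hy_meas : AEStronglyMeasurable y μ) (hy : ∀ᵐ a ∂μ, |y a| ≤ C) :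
    HasDerivAt (fun t => ∫ a, bce (A a + t * B a) (y a) ∂μ)
      (∫ a, (sigmoid (A a) - y a) * B a ∂μ) 0 := by
  have hline (t : ℝ) : Integrable (fun a => A a + t * B a) μ := hA.add (hB.const_mul t)
  have hbound : ∀ᵐ a ∂μ, ∀ t ∈ Set.univ,
      ‖(sigmoid (A a + t * B a) - y a) * B a‖ ≤ (1 + C) * |B a| := by
    filter_upwards [hy] with a ha t _
    rw [Real.norm_eq_abs, abs_mul]
    gcongr
    exact (abs_sub _ _).trans (add_le_add (abs_sigmoid_le_one _) ha)
  have hderiv : ∀ᵐ a ∂μ, ∀ t ∈ Set.univ, HasDerivAt (fun t => bce (A a + t * B a) (y a))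
      ((sigmoid (A a + t * B a) - y a) * B a) t :=
    ae_of_all _ fun a t _ =>
      (hasDerivAt_bce _ _).comp t ((hasDerivAt_mul_const (B a)).const_add (A a))
  simpa using (hasDerivAt_integral_of_dominated_loc_of_deriv_le univ_mem
    (Eventually.of_forall fun t => ((hline t).bce_comp hy_meas hy).aestronglyMeasurable)
    ((hline 0).bce_comp hy_meas hy)
    (by
      simp only [zero_mul, add_zero]
      exact (hA.aestronglyMeasurable.sigmoid_comp.sub hy_meas).mul hB.aestronglyMeasurable)
    hbound (hB.abs.const_mul _) hderiv).2

lemma integral_bce_eq_add_integral_klBernoulli_of_isLocalMin (hA : Integrable A μ)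
    (hB : Integrable B μ) (hy_meas : AEStronglyMeasurable y μ) (hy : ∀ᵐ a ∂μ, |y a| ≤ C)
    (hmin : IsLocalMin (fun t => ∫ a, bce (A a + t * (B a - A a)) (y a) ∂μ) 0) :
    ∫ a, bce (B a) (y a) ∂μ = ∫ a, bce (A a) (y a) ∂μ
      + ∫ a, klBernoulli (sigmoid (A a)) (sigmoid (B a)) ∂μ := by
  rw [integral_bce_eq_add_integral_klBernoulli_add hA hB hy_meas hy,
    hmin.hasDerivAt_eq_zero (hasDerivAt_integral_bce_add_mul hA (hB.sub hA) hy_meas hy), add_zero]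

end IntegralBCE

/-- Loss decomposition: if `θ*` minimizes the expected BCE loss over a linear subspace `V`,
then for every `θ ∈ V`, `L(θ) = L(θ*) + D(p* ‖ q)`, where `p*(x) = σ(θ*ᵀx)`,
`q(x) = σ(θᵀx)`, and `D` is the expected Bernoulli KL divergence. -/
theorem bce_loss_decomposition
    {d : ℕ} (μ : Measure ((Fin d → ℝ) × ℝ)) [IsProbabilityMeasure μ]
    (hy : ∀ᵐ q ∂μ, q.2 = 0 ∨ q.2 = 1)
    (hx : Integrable (fun q : (Fin d → ℝ) × ℝ => ‖q.1‖) μ)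
    (V : Submodule ℝ (Fin d → ℝ))
    (θs : Fin d → ℝ) (hθsV : θs ∈ V)
    (hmin : ∀ θ ∈ V, bceLoss μ θs ≤ bceLoss μ θ)
    (θ : Fin d → ℝ) (hθV : θ ∈ V) :
    bceLoss μ θ = bceLoss μ θs
      + ∫ q, klBernoulli (sigmoid (∑ i, θs i * q.1 i)) (sigmoid (∑ i, θ i * q.1 i)) ∂μ := by
  have hX : Integrable (fun q : (Fin d → ℝ) × ℝ => q.1) μ :=
    (integrable_norm_iff measurable_fst.aestronglyMeasurable).1 hx
  have hlin (w : Fin d → ℝ) : Integrable (fun q : (Fin d → ℝ) × ℝ => w ⬝ᵥ q.1) μ :=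
    integrable_finsetSum _ fun i _ => (hX.eval i).const_mul (w i)
  have hy' : ∀ᵐ q ∂μ, |q.2| ≤ 1 := hy.mono fun q h => by rcases h with h | h <;> simp [h]
  refine integral_bce_eq_add_integral_klBernoulli_of_isLocalMin (A := fun q => θs ⬝ᵥ q.1)
    (B := fun q => θ ⬝ᵥ q.1) (hlin θs) (hlin θ)
    measurable_snd.aestronglyMeasurable hy' (Eventually.of_forall fun t => ?_)
  have hmem : θs + t • (θ - θs) ∈ V := V.add_mem hθsV (V.smul_mem t (V.sub_mem hθV hθsV))
  simpa [bceLoss_eq_integral_bce, add_dotProduct, smul_dotProduct, sub_dotProduct]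
    using hmin _ hmem
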